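/- Let ω : [0,t] → ℝ be càdlàg of bounded variation of the form ω(s) = y(s) − cs with y non-decreasing pure-jump and c > 0, and let m(s) = inf_{u≤s} ω(u) be its running infimum. Then on the set {s ∈ [0,t] : ω(s) = m(s)}, the Lebesgue measure satisfies ds = −c^{-1} dm(s); equivalently, m(t) = −c · λ({s ∈ [0,t] : ω(s) = m(s)}) when ω(0) = 0. -/

import Mathlib

open Set MeasureTheory
open scoped ENNReal

/-- A function is pure jump on `[0,t]` if it is the sum of its jumps:
`f s = f 0 + ∑_{0 < u ≤ s} (f u − f(u−))`. -/
def PureJumpOn (f : ℝ → ℝ) (t : ℝ) : Prop :=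
  ∀ s ∈ Icc (0:ℝ) t, f s = f 0 + ∑' u : (Ioc (0:ℝ) s), (f u - Function.leftLim f u)

open Filter Topology

namespace InfOcc

variable {t c : ℝ} {y : ℝ → ℝ}

noncomputable def cl (t s : ℝ) : ℝ := max 0 (min s t)

lemma cl_mem (ht : 0 ≤ t) (s : ℝ) : cl t s ∈ Icc 0 t := by
  constructor
  · exact le_max_left _ _
  · exact max_le ht (min_le_right _ _)

lemma cl_eq {s : ℝ} (hs : s ∈ Icc 0 t) : cl t s = s := by
  rw [cl, min_eq_left hs.2, max_eq_right hs.1]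

lemma cl_mono : Monotone (cl t) := fun a b hab =>
  max_le_max le_rfl (min_le_min_right _ hab)

lemma cl_lip {a b : ℝ} (hab : a ≤ b) : cl t b - cl t a ≤ b - a := by
  have h2 : |min b t - min a t| ≤ b - a := by
    have h := abs_min_sub_min_le_max b t a t
    simp only [sub_self, abs_zero] at h
    rwa [max_eq_left (abs_nonneg _), abs_of_nonneg (by linarith : (0:ℝ) ≤ b - a)] at h
  have h1 : |cl t b - cl t a| ≤ |min b t - min a t| := by
    have h := abs_max_sub_max_le_max 0 (min b t) 0 (min a t)
    simp only [sub_self, abs_zero] at h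
    simpa [cl, max_eq_right (abs_nonneg (min b t - min a t))] using h
  exact (le_abs_self _).trans (h1.trans h2)

/-- the running inf of `ω u = y u - c u` over `[0,s]`. -/
noncomputable def mS (c : ℝ) (y : ℝ → ℝ) (s : ℝ) : ℝ :=
  sInf ((fun u => y u - c * u) '' Icc 0 s)

lemma img_nonempty {s : ℝ} (hs : 0 ≤ s) :
    ((fun u => y u - c * u) '' Icc 0 s).Nonempty :=
  ⟨y 0 - c * 0, ⟨0, ⟨le_rfl, hs⟩, rfl⟩⟩

lemma img_bddBelow (hc : 0 ≤ c) (hmono : MonotoneOn y (Icc 0 t)) {s : ℝ}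
    (hs : s ∈ Icc 0 t) : BddBelow ((fun u => y u - c * u) '' Icc 0 s) := by
  refine ⟨y 0 - c * s, ?_⟩
  rintro x ⟨u, hu, rfl⟩
  have hu' : u ∈ Icc 0 t := ⟨hu.1, hu.2.trans hs.2⟩
  have h1 : y 0 ≤ y u := hmono ⟨le_rfl, hs.1.trans hs.2⟩ hu' hu.1
  have h2 : c * u ≤ c * s := mul_le_mul_of_nonneg_left hu.2 hc
  simp only
  linarith

lemma mS_le (hc : 0 ≤ c) (hmono : MonotoneOn y (Icc 0 t)) {s u : ℝ}
    (hs : s ∈ Icc 0 t) (hu : u ∈ Icc 0 s) : mS c y s ≤ y u - c * u :=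
  csInf_le (img_bddBelow hc hmono hs) ⟨u, hu, rfl⟩

lemma le_mS {s x : ℝ} (hs : 0 ≤ s) (h : ∀ u ∈ Icc (0:ℝ) s, x ≤ y u - c * u) :
    x ≤ mS c y s := by
  refine le_csInf (img_nonempty hs) ?_
  rintro b ⟨u, hu, rfl⟩
  exact h u hu

lemma mS_anti (hc : 0 ≤ c) (hmono : MonotoneOn y (Icc 0 t)) {a b : ℝ}
    (ha : a ∈ Icc 0 t) (hb : b ∈ Icc 0 t) (hab : a ≤ b) : mS c y b ≤ mS c y a := by
  refine le_csInf (img_nonempty ha.1) ?_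
  rintro x ⟨u, hu, rfl⟩
  exact mS_le hc hmono hb ⟨hu.1, hu.2.trans hab⟩

lemma mS_lip (hc : 0 ≤ c) (hmono : MonotoneOn y (Icc 0 t)) {a b : ℝ}
    (ha : a ∈ Icc 0 t) (hb : b ∈ Icc 0 t) (hab : a ≤ b) :
    mS c y a - c * (b - a) ≤ mS c y b := by
  refine le_mS hb.1 (fun u hu => ?_)
  rcases le_total u a with h | h
  · have := mS_le hc hmono ha ⟨hu.1, h⟩
    nlinarith
  · have h1 : y a ≤ y u := hmono ha ⟨hu.1, hu.2.trans hb.2⟩ h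
    have h2 := mS_le hc hmono ha ⟨ha.1, le_rfl⟩
    have h3 : u ≤ b := hu.2
    nlinarith

lemma mS_zero (hy0 : y 0 = 0) : mS c y 0 = 0 := by
  have : (fun u => y u - c * u) '' Icc (0:ℝ) 0 = {0} := by
    rw [Icc_self, image_singleton, hy0]
    norm_num
  rw [mS, this, csInf_singleton]

lemma mS_nonpos (hc : 0 ≤ c) (hmono : MonotoneOn y (Icc 0 t)) (hy0 : y 0 = 0)
    {s : ℝ} (hs : s ∈ Icc 0 t) : mS c y s ≤ 0 := by
  have := mS_le hc hmono hs ⟨le_rfl, hs.1⟩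
  simpa [hy0] using this

lemma mS_le_self (hc : 0 ≤ c) (hmono : MonotoneOn y (Icc 0 t)) {s : ℝ}
    (hs : s ∈ Icc 0 t) : mS c y s ≤ y s - c * s :=
  mS_le hc hmono hs ⟨hs.1, le_rfl⟩

end InfOcc
namespace InfOcc

variable {t c : ℝ} {y : ℝ → ℝ}

/-- the negative of the (extended) running infimum. -/
noncomputable def gf (t c : ℝ) (y : ℝ → ℝ) (s : ℝ) : ℝ := -(mS c y (cl t s))

lemma gf_mono (ht : 0 ≤ t) (hc : 0 ≤ c) (hmono : MonotoneOn y (Icc 0 t)) :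
    Monotone (gf t c y) := fun a b hab => by
  simpa [gf] using mS_anti hc hmono (cl_mem ht a) (cl_mem ht b) (cl_mono hab)

lemma gf_lip (ht : 0 ≤ t) (hc : 0 ≤ c) (hmono : MonotoneOn y (Icc 0 t))
    {a b : ℝ} (hab : a ≤ b) : gf t c y b - gf t c y a ≤ c * (b - a) := by
  have h1 := mS_lip hc hmono (cl_mem ht a) (cl_mem ht b) (cl_mono hab)
  have h2 := cl_lip (t := t) hab
  simp only [gf]
  nlinarith

lemma gf_lipschitz (ht : 0 ≤ t) (hc : 0 ≤ c) (hmono : MonotoneOn y (Icc 0 t)) :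
    LipschitzWith c.toNNReal (gf t c y) := by
  refine LipschitzWith.of_dist_le_mul (fun a b => ?_)
  rcases le_total a b with hab | hab
  · rw [Real.dist_eq, Real.dist_eq, abs_of_nonpos (by linarith [gf_mono ht hc hmono hab]),
      abs_of_nonpos (by linarith)]
    have := gf_lip ht hc hmono hab
    rw [Real.coe_toNNReal c hc]
    nlinarith
  · rw [Real.dist_eq, Real.dist_eq, abs_of_nonneg (by linarith [gf_mono ht hc hmono hab]),
      abs_of_nonneg (by linarith)]
    have := gf_lip ht hc hmono hab
    rw [Real.coe_toNNReal c hc]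
    nlinarith

lemma gf_cont (ht : 0 ≤ t) (hc : 0 ≤ c) (hmono : MonotoneOn y (Icc 0 t)) :
    Continuous (gf t c y) := (gf_lipschitz ht hc hmono).continuous

/-- the Stieltjes function `-m`. -/
noncomputable def G (ht : 0 ≤ t) (hc : 0 ≤ c) (hmono : MonotoneOn y (Icc 0 t)) :
    StieltjesFunction ℝ where
  toFun := gf t c y
  mono' := gf_mono ht hc hmono
  right_continuous' x := (gf_cont ht hc hmono).continuousWithinAt

/-- the Stieltjes function `s ↦ c s - g s`. -/
noncomputable def Hf (ht : 0 ≤ t) (hc : 0 ≤ c) (hmono : MonotoneOn y (Icc 0 t)) :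
    StieltjesFunction ℝ where
  toFun := fun s => c * s - gf t c y s
  mono' := fun a b hab => by have := gf_lip ht hc hmono hab; simp only; nlinarith
  right_continuous' x := ((continuous_const.mul continuous_id).sub
    (gf_cont ht hc hmono)).continuousWithinAt

lemma G_add_H (ht : 0 ≤ t) (hc : 0 ≤ c) (hmono : MonotoneOn y (Icc 0 t)) :
    (G ht hc hmono).measure + (Hf ht hc hmono).measure = (ENNReal.ofReal c) • volume := by
  haveI : IsLocallyFiniteMeasure ((G ht hc hmono).measure + (Hf ht hc hmono).measure) := by
    constructor
    intro x
    obtain ⟨s, hs, h1⟩ := (G ht hc hmono).measure.finiteAt_nhds x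
    obtain ⟨s', hs', h2⟩ := (Hf ht hc hmono).measure.finiteAt_nhds x
    refine ⟨s ∩ s', inter_mem hs hs', ?_⟩
    rw [Measure.add_apply]
    exact ENNReal.add_lt_top.mpr ⟨lt_of_le_of_lt (measure_mono inter_subset_left) h1,
      lt_of_le_of_lt (measure_mono inter_subset_right) h2⟩
  refine Measure.ext_of_Ioc _ _ (fun a b hab => ?_)
  have h1 := gf_lip ht hc hmono hab.le
  have h2 : gf t c y a ≤ gf t c y b := gf_mono ht hc hmono hab.le
  rw [Measure.add_apply, StieltjesFunction.measure_Ioc, StieltjesFunction.measure_Ioc,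
    Measure.smul_apply, Real.volume_Ioc, smul_eq_mul,
    ← ENNReal.ofReal_mul hc, ← ENNReal.ofReal_add (by simpa [G] using h2) (by simp [Hf]; nlinarith)]
  show ENNReal.ofReal (gf t c y b - gf t c y a + (c * b - gf t c y b - (c * a - gf t c y a))) = _
  ring_nf

lemma cl_of_nonpos (ht : 0 ≤ t) {s : ℝ} (hs : s ≤ 0) : cl t s = 0 := by
  rw [cl, min_eq_left (hs.trans ht), max_eq_left hs]

lemma cl_of_ge {s : ℝ} (ht : 0 ≤ t) (hs : t ≤ s) : cl t s = t := by
  rw [cl, min_eq_right hs, max_eq_right ht]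

noncomputable def yf (t : ℝ) (y : ℝ → ℝ) (s : ℝ) : ℝ := y (cl t s)

lemma yf_mono (ht : 0 ≤ t) (hmono : MonotoneOn y (Icc 0 t)) : Monotone (yf t y) :=
  fun a b hab => hmono (cl_mem ht a) (cl_mem ht b) (cl_mono hab)

lemma yf_right_cont (ht : 0 ≤ t) (hmono : MonotoneOn y (Icc 0 t))
    (hrc : ∀ s ∈ Ico (0:ℝ) t, ContinuousWithinAt y (Ici s) s) (x : ℝ) :
    ContinuousWithinAt (yf t y) (Ici x) x := by
  rcases lt_or_ge x 0 with hx | hx0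
  · refine (continuousWithinAt_const (b := y 0)).congr_of_eventuallyEq ?_ ?_
    · filter_upwards [nhdsWithin_le_nhds (Iio_mem_nhds hx)] with u hu
      rw [yf, cl_of_nonpos ht hu.le]
    · rw [yf, cl_of_nonpos ht hx.le]
  rcases lt_or_ge x t with hxt | htx
  · have h1 : ContinuousWithinAt y (Ici x) x := hrc x ⟨hx0, hxt⟩
    have h2 : ContinuousWithinAt (cl t) (Ici x) x := (continuous_max.comp
      (continuous_const.prodMk ((continuous_id.min continuous_const)))).continuousWithinAt
    have h3 : MapsTo (cl t) (Ici x) (Ici x) := fun u hu => by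
      have := cl_mono (t := t) hu
      rwa [cl_eq ⟨hx0, hxt.le⟩] at this
    have hclx : cl t x = x := cl_eq ⟨hx0, hxt.le⟩
    have h1' : ContinuousWithinAt y (Ici (cl t x)) (cl t x) := by rwa [hclx]
    have h3' : MapsTo (cl t) (Ici x) (Ici (cl t x)) := by rwa [hclx]
    exact h1'.comp h2 h3' 
  · refine (continuousWithinAt_const (b := y t)).congr ?_ ?_
    · intro u hu
      rw [yf, cl_of_ge ht (htx.trans hu)]
    · rw [yf, cl_of_ge ht htx]

/-- the Stieltjes function extending `y`. -/
noncomputable def Yf (ht : 0 ≤ t) (hmono : MonotoneOn y (Icc 0 t))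
    (hrc : ∀ s ∈ Ico (0:ℝ) t, ContinuousWithinAt y (Ici s) s) : StieltjesFunction ℝ where
  toFun := yf t y
  mono' := yf_mono ht hmono
  right_continuous' := yf_right_cont ht hmono hrc

lemma yf_eventuallyEq (ht : 0 ≤ t) {u : ℝ} (hu : u ∈ Ioc 0 t) :
    y =ᶠ[𝓝[<] u] yf t y := by
  filter_upwards [Ioo_mem_nhdsLT hu.1] with v hv
  rw [yf, cl_eq ⟨hv.1.le, hv.2.le.trans hu.2⟩]

lemma yf_leftLim (ht : 0 ≤ t) (hmono : MonotoneOn y (Icc 0 t)) {u : ℝ}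
    (hu : u ∈ Ioc 0 t) : Function.leftLim y u = Function.leftLim (yf t y) u := by
  have h1 : Tendsto (yf t y) (𝓝[<] u) (𝓝 (Function.leftLim (yf t y) u)) :=
    (yf_mono ht hmono).tendsto_leftLim u
  have h2 : Tendsto y (𝓝[<] u) (𝓝 (Function.leftLim (yf t y) u)) :=
    h1.congr' (yf_eventuallyEq ht hu).symm
  exact leftLim_eq_of_tendsto h2

lemma jump_nonneg (ht : 0 ≤ t) (hmono : MonotoneOn y (Icc 0 t)) {u : ℝ}
    (hu : u ∈ Ioc 0 t) : 0 ≤ y u - Function.leftLim y u := by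
  have h1 : Function.leftLim (yf t y) u ≤ yf t y u := (yf_mono ht hmono).leftLim_le le_rfl
  rw [yf_leftLim ht hmono hu]
  have : yf t y u = y u := by rw [yf, cl_eq ⟨hu.1.le, hu.2⟩]
  linarith [this ▸ h1]

lemma jump_summable (ht : 0 ≤ t) (hmono : MonotoneOn y (Icc 0 t)) (hy0 : y 0 = 0)
    (hpj : PureJumpOn y t) :
    Summable (fun u : Ioc (0:ℝ) t => y u - Function.leftLim y u) := by
  by_cases h : Summable (fun u : Ioc (0:ℝ) t => y u - Function.leftLim y u)
  · exact h
  exfalso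
  have h0 := hpj t ⟨ht, le_rfl⟩
  rw [tsum_eq_zero_of_not_summable h, hy0, add_zero] at h0
  apply h
  have hzero : ∀ u ∈ Icc (0:ℝ) t, y u = 0 := fun u hu =>
    le_antisymm (h0 ▸ hmono hu ⟨ht, le_rfl⟩ hu.2) (hy0 ▸ hmono (left_mem_Icc.mpr ht) hu hu.1)
  have : (fun u : Ioc (0:ℝ) t => y u - Function.leftLim y u) = fun _ => 0 := by
    funext u
    have h1 : y u = 0 := hzero u ⟨u.2.1.le, u.2.2⟩
    have h2 : Function.leftLim y (u : ℝ) = 0 := by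
      refine leftLim_eq_of_tendsto ?_
      refine tendsto_const_nhds.congr' ?_
      filter_upwards [Ioo_mem_nhdsLT u.2.1] with v hv
      exact (hzero v ⟨hv.1.le, hv.2.le.trans u.2.2⟩).symm
    rw [h1, h2, sub_zero]
  rw [this]
  exact summable_zero

lemma Yf_singular (ht : 0 ≤ t) (hmono : MonotoneOn y (Icc 0 t)) (hy0 : y 0 = 0)
    (hrc : ∀ s ∈ Ico (0:ℝ) t, ContinuousWithinAt y (Ici s) s)
    (hpj : PureJumpOn y t) :
    (Yf ht hmono hrc).measure ⟂ₘ (volume : Measure ℝ) := by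
  set Y := Yf ht hmono hrc with hY
  set D : Set ℝ := {u | u ∈ Ioc (0:ℝ) t ∧ y u ≠ Function.leftLim y u} with hD
  have hDsub : D ⊆ {u | ¬ContinuousAt (yf t y) u} := by
    rintro u ⟨hu, hne⟩
    intro hcont
    apply hne
    have h1 : Function.leftLim (yf t y) u = yf t y u :=
      ((yf_mono ht hmono).continuousWithinAt_Iio_iff_leftLim_eq).mp hcont.continuousWithinAt
    rw [yf_leftLim ht hmono hu, h1, yf, cl_eq ⟨hu.1.le, hu.2⟩]
  have hDcount : D.Countable :=
    ((yf_mono ht hmono).countable_not_continuousAt).mono hDsub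
  have hDmeas : MeasurableSet D := hDcount.measurableSet
  -- the total mass
  have hbot : Tendsto (yf t y) atBot (𝓝 0) := by
    refine tendsto_const_nhds.congr' ?_
    filter_upwards [Iic_mem_atBot 0] with v hv
    rw [yf, cl_of_nonpos ht hv, hy0]
  have htop : Tendsto (yf t y) atTop (𝓝 (y t)) := by
    refine tendsto_const_nhds.congr' ?_
    filter_upwards [Ici_mem_atTop t] with v hv
    rw [yf, cl_of_ge ht hv]
  have huniv : Y.measure univ = ENNReal.ofReal (y t) := by
    rw [Y.measure_univ hbot htop, sub_zero]
  -- measure of D via singletons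
  have hsingle : ∀ u ∈ D, Y.measure {u} = ENNReal.ofReal (y u - Function.leftLim y u) := by
    rintro u ⟨hu, -⟩
    rw [Y.measure_singleton]
    congr 1
    show yf t y u - Function.leftLim (yf t y) u = _
    rw [← yf_leftLim ht hmono hu, yf, cl_eq ⟨hu.1.le, hu.2⟩]
  have hDmass : Y.measure D = ENNReal.ofReal (y t) := by
    have h1 : ∑' u : D, Y.measure {(u : ℝ)} = Y.measure D := by
      simpa using tsum_measure_preimage_singleton (μ := Y.measure) hDcount
        (f := (id : ℝ → ℝ)) (fun b _ => measurableSet_singleton b)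
    rw [← h1]
    have h2 : ∀ u : D, Y.measure {(u : ℝ)} =
        ENNReal.ofReal (y u - Function.leftLim y u) := fun u => hsingle u u.2
    rw [tsum_congr h2]
    have hpjt := hpj t ⟨ht, le_rfl⟩
    rw [hy0, zero_add] at hpjt
    rw [hpjt, ENNReal.ofReal_tsum_of_nonneg (fun u => jump_nonneg ht hmono u.2)
      (jump_summable ht hmono hy0 hpj)]
    rw [tsum_subtype D (fun u => ENNReal.ofReal (y u - Function.leftLim y u)),
      tsum_subtype (Ioc 0 t) (fun u => ENNReal.ofReal (y u - Function.leftLim y u))]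
    congr 1
    funext u
    by_cases hu : u ∈ D
    · rw [indicator_of_mem hu, indicator_of_mem hu.1]
    · by_cases hu2 : u ∈ Ioc (0:ℝ) t
      · have : y u = Function.leftLim y u := by
          by_contra hne
          exact hu ⟨hu2, hne⟩
        rw [indicator_of_notMem hu, indicator_of_mem hu2, this, sub_self,
          ENNReal.ofReal_zero]
      · rw [indicator_of_notMem hu, indicator_of_notMem hu2]
  have hfin : Y.measure D ≠ ⊤ := by rw [hDmass]; exact ENNReal.ofReal_ne_top
  have hcompl : Y.measure Dᶜ = 0 := by
    have := measure_compl hDmeas hfin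
    rw [this, hDmass, huniv, tsub_self]
  exact ⟨Dᶜ, hDmeas.compl, hcompl, by rw [compl_compl]; exact hDcount.measure_zero _⟩

lemma yf_deriv_zero (ht : 0 ≤ t) (hmono : MonotoneOn y (Icc 0 t)) (hy0 : y 0 = 0)
    (hrc : ∀ s ∈ Ico (0:ℝ) t, ContinuousWithinAt y (Ici s) s)
    (hpj : PureJumpOn y t) :
    ∀ᵐ s : ℝ, HasDerivAt (yf t y) 0 s := by
  have hsing := Yf_singular ht hmono hy0 hrc hpj
  have hrn : (Yf ht hmono hrc).measure.rnDeriv volume =ᵐ[volume] 0 :=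
    (Measure.rnDeriv_eq_zero _ _).mpr hsing
  filter_upwards [(Yf ht hmono hrc).ae_hasDerivAt, hrn] with s h1 h2
  simpa [h2] using (show HasDerivAt (yf t y) _ s from h1)

lemma gf_eq {s : ℝ} (hs : s ∈ Icc (0:ℝ) t) : gf t c y s = -(mS c y s) := by
  rw [gf, cl_eq hs]

lemma gf_leftLim (ht : 0 ≤ t) (hc : 0 ≤ c) (hmono : MonotoneOn y (Icc 0 t)) (x : ℝ) :
    Function.leftLim (gf t c y) x = gf t c y x :=
  ((gf_mono ht hc hmono).continuousWithinAt_Iio_iff_leftLim_eq).mp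
    (gf_cont ht hc hmono).continuousWithinAt

lemma gf_const_right (ht : 0 ≤ t) (hc : 0 < c) (hmono : MonotoneOn y (Icc 0 t))
    {s : ℝ} (hs : s ∈ Icc 0 t) (hne : mS c y s < y s - c * s) :
    ∃ δ > 0, ∀ u, s ≤ u → u ≤ s + δ → gf t c y u = gf t c y s := by
  set ε := y s - c * s - mS c y s with hε
  have hεpos : 0 < ε := by simp [hε]; linarith
  refine ⟨ε / (2 * c), by positivity, fun u hsu hud => ?_⟩
  have hclu : cl t u ∈ Icc 0 t := cl_mem ht u
  have h1 : s ≤ cl t u := by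
    have := cl_mono (t := t) hsu
    rwa [cl_eq hs] at this
  have h2 : cl t u ≤ s + ε / (2 * c) := by
    have := cl_lip (t := t) hsu
    rw [cl_eq hs] at this
    linarith
  rw [gf, gf_eq hs]
  have hmeq : mS c y (cl t u) = mS c y s := by
    refine le_antisymm (mS_anti hc.le hmono hs hclu h1) ?_
    refine le_mS hclu.1 (fun v hv => ?_)
    rcases le_total v s with h | h
    · exact mS_le hc.le hmono hs ⟨hv.1, h⟩
    · have hvt : v ∈ Icc 0 t := ⟨hv.1, hv.2.trans hclu.2⟩
      have hyv : y s ≤ y v := hmono hs hvt h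
      have hvb : v ≤ s + ε / (2 * c) := hv.2.trans h2
      have h3 : ε / (2 * c) * c = ε / 2 := by field_simp
      nlinarith
  rw [hmeq]

lemma Cq_null (ht : 0 ≤ t) (hc : 0 ≤ c) (hmono : MonotoneOn y (Icc 0 t)) (q : ℝ) :
    (G ht hc hmono).measure {s | s ≤ q ∧ gf t c y s = gf t c y q} = 0 := by
  set g := gf t c y with hg
  set C := {s | s ≤ q ∧ g s = g q} with hC
  by_cases hne : C.Nonempty
  · by_cases hbdd : BddBelow C
    · set α := sInf C with hα
      obtain ⟨s₀, hs₀⟩ := _root_.id hne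
      have hαq : α ≤ q := (csInf_le hbdd hs₀).trans hs₀.1
      have hαfix : g q ≤ g α := by
        have h1 : ∀ u, α < u → g q ≤ g u := by
          intro u hu
          obtain ⟨s, hsC, hsu⟩ := exists_lt_of_csInf_lt hne hu
          rw [← hsC.2]
          exact gf_mono ht hc hmono hsu.le
        have h2 : (⨅ r : Ioi α, g r) = g α := (G ht hc hmono).iInf_Ioi_eq α
        rw [← h2]
        exact le_ciInf (fun r => h1 r r.2)
      have hsub : C ⊆ Icc α q := fun s hs => ⟨csInf_le hbdd hs, hs.1⟩
      refine measure_mono_null hsub ?_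
      rw [(G ht hc hmono).measure_Icc]
      show ENNReal.ofReal (g q - Function.leftLim g α) = 0
      rw [gf_leftLim ht hc hmono]
      have : g α ≤ g q := gf_mono ht hc hmono hαq
      rw [ENNReal.ofReal_eq_zero]
      linarith
    · have hconst : ∀ u ≤ q, g u = g q := by
        intro u hu
        obtain ⟨s, hsC, hsu⟩ := not_bddBelow_iff.mp hbdd u
        refine le_antisymm (gf_mono ht hc hmono hu) ?_
        rw [← hsC.2]
        exact gf_mono ht hc hmono hsu.le
      have hsub : C ⊆ ⋃ n : ℕ, Ioc (q - n - 1) q := by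
        intro s hs
        obtain ⟨n, hn⟩ := exists_nat_gt (q - s)
        exact mem_iUnion.mpr ⟨n, by constructor <;> [linarith; exact hs.1]⟩
      refine measure_mono_null hsub ?_
      refine le_antisymm ((measure_iUnion_le _).trans ?_) zero_le
      have : ∀ n : ℕ, (G ht hc hmono).measure (Ioc (q - n - 1) q) = 0 := by
        intro n
        rw [(G ht hc hmono).measure_Ioc]
        show ENNReal.ofReal (g q - g (q - n - 1)) = 0
        rw [hconst (q - n - 1) (by linarith [Nat.cast_nonneg (α := ℝ) n])]
        simp
      simp [this]
  · rw [not_nonempty_iff_eq_empty.mp hne]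
    exact measure_empty

lemma G_compl_null (ht : 0 ≤ t) (hc : 0 < c) (hmono : MonotoneOn y (Icc 0 t)) :
    (G ht hc.le hmono).measure {s | s ∈ Icc (0:ℝ) t ∧ y s - c * s = mS c y s}ᶜ = 0 := by
  set g := gf t c y with hgdef
  set μ := (G ht hc.le hmono).measure with hμ
  have hg0 : ∀ x ≤ (0:ℝ), g x = g 0 := by
    intro x hx
    show gf t c y x = gf t c y 0
    rw [gf, gf, cl_of_nonpos ht hx, cl_of_nonpos ht le_rfl]
  have hgt : ∀ x, t ≤ x → g x = g t := by
    intro x hx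
    show gf t c y x = gf t c y t
    rw [gf, gf, cl_of_ge ht hx, cl_of_ge ht le_rfl]
  have hIio : μ (Iio (0:ℝ)) = 0 := by
    have hsub : Iio (0:ℝ) ⊆ ⋃ n : ℕ, Ioc (-(n:ℝ) - 1) 0 := by
      intro x hx
      obtain ⟨n, hn⟩ := exists_nat_gt (-x)
      exact mem_iUnion.mpr ⟨n, by constructor <;> [linarith; linarith [mem_Iio.mp hx]]⟩
    refine measure_mono_null hsub (le_antisymm ((measure_iUnion_le _).trans ?_) zero_le)
    have h : ∀ n : ℕ, μ (Ioc (-(n:ℝ) - 1) 0) = 0 := fun n => by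
      rw [hμ, (G ht hc.le hmono).measure_Ioc]
      show ENNReal.ofReal (g 0 - g (-(n:ℝ) - 1)) = 0
      rw [hg0 (-(n:ℝ) - 1) (by linarith [Nat.cast_nonneg (α := ℝ) n])]
      simp
    simp [h]
  have hIoi : μ (Ioi t) = 0 := by
    have hsub : Ioi t ⊆ ⋃ n : ℕ, Ioc t (t + n + 1) := by
      intro x hx
      obtain ⟨n, hn⟩ := exists_nat_gt (x - t)
      exact mem_iUnion.mpr ⟨n, mem_Ioi.mp hx, by linarith⟩
    refine measure_mono_null hsub (le_antisymm ((measure_iUnion_le _).trans ?_) zero_le)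
    have h : ∀ n : ℕ, μ (Ioc t (t + (n:ℝ) + 1)) = 0 := fun n => by
      rw [hμ, (G ht hc.le hmono).measure_Ioc]
      show ENNReal.ofReal (g (t + (n:ℝ) + 1) - g t) = 0
      rw [hgt (t + (n:ℝ) + 1) (by linarith [Nat.cast_nonneg (α := ℝ) n])]
      simp
    simp [h]
  have hUq : μ (⋃ q : ℚ, {s : ℝ | s ≤ (q:ℝ) ∧ g s = g q}) = 0 := by
    refine le_antisymm ((measure_iUnion_le _).trans ?_) zero_le
    have h : ∀ q : ℚ, μ {s : ℝ | s ≤ (q:ℝ) ∧ g s = g q} = 0 := fun q =>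
      Cq_null ht hc.le hmono q
    simp [h]
  have hcover : {s | s ∈ Icc (0:ℝ) t ∧ y s - c * s = mS c y s}ᶜ ⊆
      (Iio 0 ∪ Ioi t) ∪ ⋃ q : ℚ, {s : ℝ | s ≤ (q:ℝ) ∧ g s = g q} := by
    intro s hs
    simp only [mem_compl_iff, mem_setOf_eq, not_and] at hs
    rcases lt_or_ge s 0 with h0 | h0
    · exact Or.inl (Or.inl h0)
    rcases lt_or_ge t s with h1 | h1
    · exact Or.inl (Or.inr h1)
    have hsIcc : s ∈ Icc (0:ℝ) t := ⟨h0, h1⟩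
    have hne := hs hsIcc
    have hlt : mS c y s < y s - c * s :=
      lt_of_le_of_ne (mS_le_self hc.le hmono hsIcc) (fun h => hne h.symm)
    obtain ⟨δ, hδ, hconst⟩ := gf_const_right ht hc hmono hsIcc hlt
    obtain ⟨q, hq1, hq2⟩ := exists_rat_btwn (lt_add_of_pos_right s hδ)
    exact Or.inr (mem_iUnion.mpr ⟨q, hq1.le, (hconst q hq1.le hq2.le).symm⟩)
  refine measure_mono_null hcover (le_antisymm ?_ zero_le)
  calc μ ((Iio 0 ∪ Ioi t) ∪ ⋃ q : ℚ, {s : ℝ | s ≤ (q:ℝ) ∧ g s = g q})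
      ≤ (μ (Iio 0) + μ (Ioi t)) + μ (⋃ q : ℚ, {s : ℝ | s ≤ (q:ℝ) ∧ g s = g q}) :=
        le_trans (measure_union_le _ _) (add_le_add (measure_union_le _ _) le_rfl)
    _ = 0 := by rw [hIio, hIoi, hUq]; simp

lemma A_meas (ht : 0 ≤ t) (hc : 0 ≤ c) (hmono : MonotoneOn y (Icc 0 t)) :
    MeasurableSet {s | s ∈ Icc (0:ℝ) t ∧ y s - c * s = mS c y s} := by
  have heq : {s | s ∈ Icc (0:ℝ) t ∧ y s - c * s = mS c y s} =
      Icc 0 t ∩ {s | yf t y s - c * s + gf t c y s = 0} := by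
    ext s
    simp only [mem_setOf_eq, mem_inter_iff, mem_Icc]
    constructor
    · rintro ⟨hs, h⟩
      refine ⟨hs, ?_⟩
      rw [yf, cl_eq hs, gf_eq hs, h]
      ring
    · rintro ⟨hs, h⟩
      rw [yf, cl_eq hs, gf_eq hs] at h
      exact ⟨hs, by linarith⟩
  rw [heq]
  refine measurableSet_Icc.inter ?_
  have hmeas : Measurable (fun s => yf t y s - c * s + gf t c y s) :=
    (((yf_mono ht hmono).measurable).sub (measurable_const.mul measurable_id)).add
      (gf_cont ht hc hmono).measurable
  exact hmeas (measurableSet_singleton 0)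

lemma lower_bound (ht : 0 < t) (hc : 0 < c) (hmono : MonotoneOn y (Icc 0 t))
    (hy0 : y 0 = 0) (hrc : ∀ s ∈ Ico (0:ℝ) t, ContinuousWithinAt y (Ici s) s)
    (hpj : PureJumpOn y t) :
    ENNReal.ofReal c * volume {s | s ∈ Icc (0:ℝ) t ∧ y s - c * s = mS c y s} ≤
      (G ht.le hc.le hmono).measure {s | s ∈ Icc (0:ℝ) t ∧ y s - c * s = mS c y s} := by
  set A := {s | s ∈ Icc (0:ℝ) t ∧ y s - c * s = mS c y s} with hA
  set μ := (G ht.le hc.le hmono).measure with hμ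
  have hAmeas : MeasurableSet A := A_meas ht.le hc.le hmono
  have hae : ∀ᵐ s : ℝ, s ∈ A → s < t → ENNReal.ofReal c ≤ μ.rnDeriv volume s := by
    filter_upwards [(G ht.le hc.le hmono).ae_hasDerivAt,
      yf_deriv_zero ht.le hmono hy0 hrc hpj] with s hG hY hsA hst
    by_cases htop : μ.rnDeriv volume s = ⊤
    · rw [htop]; exact le_top
    have hsIcc : s ∈ Icc (0:ℝ) t := hsA.1
    -- slope inequalities
    have hGslope : Tendsto (slope (gf t c y) s) (𝓝[>] s)
        (𝓝 ((μ.rnDeriv volume s).toReal)) := by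
      have : HasDerivWithinAt (gf t c y) _ (Ioi s) s := (hG.hasDerivWithinAt (s := Ioi s))
      rw [hasDerivWithinAt_iff_tendsto_slope] at this
      simpa [Set.diff_singleton_eq_self (show s ∉ Ioi s by simp)] using this
    have hYslope : Tendsto (slope (yf t y) s) (𝓝[>] s) (𝓝 0) := by
      have := (hY.hasDerivWithinAt (s := Ioi s))
      rw [hasDerivWithinAt_iff_tendsto_slope] at this
      simpa [Set.diff_singleton_eq_self (show s ∉ Ioi s by simp)] using this
    have hsum : Tendsto (fun u => slope (gf t c y) s u + slope (yf t y) s u) (𝓝[>] s)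
        (𝓝 ((μ.rnDeriv volume s).toReal + 0)) := hGslope.add hYslope
    have hev : ∀ᶠ u in 𝓝[>] s, c ≤ slope (gf t c y) s u + slope (yf t y) s u := by
      filter_upwards [Ioc_mem_nhdsGT_of_mem ⟨le_rfl, hst⟩] with u hu
      have huIcc : u ∈ Icc (0:ℝ) t := ⟨hsIcc.1.trans hu.1.le, hu.2⟩
      have h1 : mS c y u ≤ y u - c * u := mS_le_self hc.le hmono huIcc
      have h2 : y s - c * s = mS c y s := hsA.2
      have h3 : gf t c y u - gf t c y s = mS c y s - mS c y u := by
        rw [gf_eq huIcc, gf_eq hsIcc]; ring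
      have h4 : yf t y u - yf t y s = y u - y s := by
        rw [yf, yf, cl_eq huIcc, cl_eq hsIcc]
      have hus : 0 < u - s := by linarith [hu.1]
      rw [slope_def_field, slope_def_field]
      rw [← add_div, le_div_iff₀ hus]
      nlinarith
    have hle : c ≤ (μ.rnDeriv volume s).toReal := by
      have := ge_of_tendsto hsum hev
      linarith
    calc ENNReal.ofReal c ≤ ENNReal.ofReal ((μ.rnDeriv volume s).toReal) :=
          ENNReal.ofReal_le_ofReal hle
      _ = μ.rnDeriv volume s := ENNReal.ofReal_toReal htop
  -- reduce to A ∩ Iio t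
  have hvolA : volume A = volume (A ∩ Iio t) := by
    refine le_antisymm ?_ (measure_mono inter_subset_left)
    have hsub : A ⊆ (A ∩ Iio t) ∪ {t} := by
      intro s hs
      rcases lt_or_eq_of_le hs.1.2 with h | h
      · exact Or.inl ⟨hs, h⟩
      · exact Or.inr (by simp [h])
    calc volume A ≤ volume ((A ∩ Iio t) ∪ {t}) := measure_mono hsub
      _ ≤ volume (A ∩ Iio t) + volume {t} := measure_union_le _ _
      _ = volume (A ∩ Iio t) := by simp
  have hS : MeasurableSet (A ∩ Iio t) := hAmeas.inter measurableSet_Iio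
  have step1 : ENNReal.ofReal c * volume (A ∩ Iio t) ≤
      ∫⁻ x in A ∩ Iio t, μ.rnDeriv volume x := by
    rw [← setLIntegral_const (A ∩ Iio t) (ENNReal.ofReal c)]
    refine lintegral_mono_ae ?_
    filter_upwards [ae_restrict_of_ae hae, ae_restrict_mem hS] with x hx hmem
    exact hx hmem.1 hmem.2
  have step2 : ∫⁻ x in A ∩ Iio t, μ.rnDeriv volume x ≤ μ (A ∩ Iio t) := by
    rw [← withDensity_apply _ hS]
    exact Measure.le_iff'.mp (μ.withDensity_rnDeriv_le volume) _
  calc ENNReal.ofReal c * volume A = ENNReal.ofReal c * volume (A ∩ Iio t) := by rw [hvolA]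
    _ ≤ μ (A ∩ Iio t) := step1.trans step2
    _ ≤ μ A := measure_mono inter_subset_left

end InfOcc

open InfOcc

/-- For `ω s = y s − c s` with `y` non-decreasing, càdlàg, pure jump and `y 0 = 0`,
the final running infimum satisfies
`m t = −c · λ({s ∈ [0,t] : ω s = m s})`, i.e. on the set where `ω` attains its running
infimum, Lebesgue measure coincides with `−c⁻¹ dm`. -/
theorem inf_occupation (t c : ℝ) (ht : 0 < t) (hc : 0 < c) (y : ℝ → ℝ)
    (hmono : MonotoneOn y (Icc 0 t)) (hy0 : y 0 = 0)
    (hrc : ∀ s ∈ Ico (0:ℝ) t, ContinuousWithinAt y (Ici s) s)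
    (hpj : PureJumpOn y t) :
    sInf ((fun s => y s - c * s) '' Icc 0 t) =
      -c * (volume {s | s ∈ Icc (0:ℝ) t ∧
        y s - c * s = sInf ((fun u => y u - c * u) '' Icc 0 s)}).toReal := by
  have hAeq : {s | s ∈ Icc (0:ℝ) t ∧
      y s - c * s = sInf ((fun u => y u - c * u) '' Icc 0 s)} =
      {s | s ∈ Icc (0:ℝ) t ∧ y s - c * s = mS c y s} := rfl
  rw [hAeq]
  show mS c y t = _
  set A := {s | s ∈ Icc (0:ℝ) t ∧ y s - c * s = mS c y s} with hA
  set μ := (InfOcc.G ht.le hc.le hmono).measure with hμ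
  have htIcc : t ∈ Icc (0:ℝ) t := ⟨ht.le, le_rfl⟩
  have h0Icc : (0:ℝ) ∈ Icc (0:ℝ) t := ⟨le_rfl, ht.le⟩
  have hgf0 : gf t c y 0 = 0 := by rw [gf_eq h0Icc, mS_zero hy0, neg_zero]
  have hgft : gf t c y t = -(mS c y t) := gf_eq htIcc
  have hnull : μ Aᶜ = 0 := G_compl_null ht.le hc hmono
  have hIoc : μ (Ioc 0 t) = ENNReal.ofReal (-(mS c y t)) := by
    rw [hμ, (InfOcc.G ht.le hc.le hmono).measure_Ioc]
    show ENNReal.ofReal (gf t c y t - gf t c y 0) = _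
    rw [hgf0, hgft, sub_zero]
  have hIcc : μ (Icc 0 t) = ENNReal.ofReal (-(mS c y t)) := by
    rw [hμ, (InfOcc.G ht.le hc.le hmono).measure_Icc]
    show ENNReal.ofReal (gf t c y t - Function.leftLim (gf t c y) 0) = _
    rw [gf_leftLim ht.le hc.le hmono, hgf0, hgft, sub_zero]
  have hupper : ENNReal.ofReal (-(mS c y t)) ≤ ENNReal.ofReal c * volume A := by
    rw [← hIoc]
    have h1 : μ (Ioc 0 t) ≤ μ A + μ Aᶜ := by
      calc μ (Ioc 0 t) ≤ μ (A ∪ Aᶜ) := measure_mono (by rw [union_compl_self]; exact subset_univ _)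
        _ ≤ μ A + μ Aᶜ := measure_union_le _ _
    rw [hnull, add_zero] at h1
    refine h1.trans ?_
    have h2 : μ A ≤ (μ + (InfOcc.Hf ht.le hc.le hmono).measure) A := by
      rw [Measure.add_apply]; exact le_self_add
    rw [hμ, G_add_H ht.le hc.le hmono] at h2
    simpa using h2
  have hlower : ENNReal.ofReal c * volume A ≤ ENNReal.ofReal (-(mS c y t)) := by
    refine (lower_bound ht hc hmono hy0 hrc hpj).trans ?_
    rw [← hIcc]
    exact measure_mono (fun s hs => hs.1)
  have hkey : ENNReal.ofReal (-(mS c y t)) = ENNReal.ofReal c * volume A :=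
    le_antisymm hupper hlower
  have hvolfin : volume A ≠ ⊤ := by
    have : volume A ≤ volume (Icc (0:ℝ) t) := measure_mono (fun s hs => hs.1)
    exact (this.trans_lt (by rw [Real.volume_Icc]; exact ENNReal.ofReal_lt_top)).ne
  have := congrArg ENNReal.toReal hkey
  rw [ENNReal.toReal_ofReal (by linarith [mS_nonpos hc.le hmono hy0 htIcc]),
    ENNReal.toReal_mul, ENNReal.toReal_ofReal hc.le] at this
  linarith
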